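/- For an update flow network with exactly two update flow pairs, each forming a DAG, a feasible update sequence exists if and only if the dependency graph of its blocks is acyclic. -/

import Mathlib

/-!
A formal model of congestion-free flow rerouting (network update scheduling).
An update flow network consists of a source `s`, a terminal `t`, edge
capacities, and `k` update flow pairs, each given by an old `s`-`t` path and
an update (new) `s`-`t` path (represented as lists of vertices) with a demand.
An update sequence assigns to every update `(v, i)` (vertex `v`, pair `i`) a
round; it is feasible if resolving all updates of earlier rounds together with
any subset of the current round always leaves, for every pair, a unique valid
(capacity-respecting) transient `s`-`t` path among the active edges, and the
family of transient paths jointly respects the capacities.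
-/

namespace FlowUpdate

variable {V : Type} [DecidableEq V] {k : ℕ}

/-- The edges of a path given as a list of vertices. -/
def edgesOf (p : List V) : List (V × V) := p.zip p.tail

/-- The subpath of `p` from vertex `a` to vertex `z` (inclusive). -/
def segment (p : List V) (a z : V) : List V :=
  ((p.dropWhile (fun v => decide (v ≠ a))).takeWhile (fun v => decide (v ≠ z))) ++ [z]

/-- The outgoing edge of `v` on the path `p`, if any. -/
def outEdge (p : List V) (v : V) : Option (V × V) :=
  (edgesOf p).find? (fun e => decide (e.1 = v))

/-- An update flow network with `k` update flow pairs. -/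
structure UFN (V : Type) (k : ℕ) where
  s : V
  t : V
  cap : V → V → ℕ
  old : Fin k → List V
  new : Fin k → List V
  demand : Fin k → ℕ

namespace UFN

/-- After resolving the set of updates `U`, edge `e` is active for pair `i` iff
it is an old edge whose tail is not yet updated, or a new edge whose tail is
updated. -/
def active (G : UFN V k) (U : Set (V × Fin k)) (i : Fin k) (e : V × V) : Prop :=
  (e ∈ edgesOf (G.old i) ∧ (e.1, i) ∉ U) ∨ (e ∈ edgesOf (G.new i) ∧ (e.1, i) ∈ U)

/-- `p` is a simple `s`-`t` path all of whose edges satisfy `E`. -/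
def IsPathIn (E : V × V → Prop) (s t : V) (p : List V) : Prop :=
  p.head? = some s ∧ p.getLast? = some t ∧ List.Chain' (fun u v => E (u, v)) p ∧ p.Nodup

/-- `p` respects the capacities for the demand of pair `i`. -/
def ValidPath (G : UFN V k) (i : Fin k) (p : List V) : Prop :=
  ∀ e ∈ edgesOf p, G.demand i ≤ G.cap e.1 e.2

/-- `T` is the unique valid transient path of pair `i` after resolving `U`. -/
def TransientPair (G : UFN V k) (U : Set (V × Fin k)) (i : Fin k) (T : List V) : Prop :=
  IsPathIn (G.active U i) G.s G.t T ∧ G.ValidPath i T ∧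
    ∀ p, IsPathIn (G.active U i) G.s G.t p → G.ValidPath i p → p = T

/-- After resolving `U`, every pair has a unique valid transient path, and the
family of transient paths jointly respects the capacities. -/
def TransientFamily (G : UFN V k) (U : Set (V × Fin k)) : Prop :=
  ∃ T : Fin k → List V,
    (∀ i, G.TransientPair U i (T i)) ∧
    (∀ u v : V, (∑ i : Fin k, if (u, v) ∈ edgesOf (T i) then G.demand i else 0) ≤ G.cap u v)

/-- An update sequence (an assignment of rounds to all updates) is feasible if
after resolving all updates of rounds `< r` together with any subset of the
updates of round `r`, all pairs admit a transient family. -/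
def Feasible (G : UFN V k) (R : V × Fin k → ℕ) : Prop :=
  ∀ r : ℕ, ∀ S : Set (V × Fin k), (∀ u ∈ S, R u = r) →
    G.TransientFamily ({u | R u < r} ∪ S)

/-- `p` is a simple path from the source to the terminal. -/
def IsStPath (G : UFN V k) (p : List V) : Prop :=
  p.head? = some G.s ∧ p.getLast? = some G.t ∧ p.Nodup

/-- Well-formedness of an update flow network: all old and new flows are simple
`s`-`t` paths, each pair forms a DAG, each new path respects capacities for its
own demand, and both the old family and the new family jointly respect the
capacities. -/
def WellFormed (G : UFN V k) : Prop :=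
  (∀ i, G.IsStPath (G.old i) ∧ G.IsStPath (G.new i)) ∧
  (∀ i, ∃ ord : V → ℕ, ∀ e ∈ edgesOf (G.old i) ++ edgesOf (G.new i), ord e.1 < ord e.2) ∧
  (∀ i, G.ValidPath i (G.new i)) ∧
  (∀ u v : V, (∑ i : Fin k, if (u, v) ∈ edgesOf (G.old i) then G.demand i else 0) ≤ G.cap u v) ∧
  (∀ u v : V, (∑ i : Fin k, if (u, v) ∈ edgesOf (G.new i) then G.demand i else 0) ≤ G.cap u v)

/-- The common vertices of the old and new path of pair `i`, in path order. -/
def commons (G : UFN V k) (i : Fin k) : List V :=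
  (G.old i).filter (fun v => decide (v ∈ G.new i))

/-- A block of pair `i` is a pair `(a, z)` of consecutive common vertices of the
old and new paths of `i`. -/
def IsBlock (G : UFN V k) (i : Fin k) (b : V × V) : Prop :=
  b ∈ edgesOf (G.commons i)

/-- A (candidate) block: a pair index together with its start and end vertices. -/
abbrev Blk (V : Type) (k : ℕ) := Fin k × V × V

def IsBlk (G : UFN V k) (b : Blk V k) : Prop := G.IsBlock b.1 b.2

/-- The old-path segment of a block. -/
def blkOldSeg (G : UFN V k) (b : Blk V k) : List V := segment (G.old b.1) b.2.1 b.2.2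

/-- The update-path segment of a block. -/
def blkNewSeg (G : UFN V k) (b : Blk V k) : List V := segment (G.new b.1) b.2.1 b.2.2

/-- Block `b1` depends on block `b2` (written `b1 → b2`) if they belong to
different pairs and some edge lies on `b1`'s update path and on `b2`'s old path
with capacity less than the sum of the two demands. -/
def Dep (G : UFN V k) (b1 b2 : Blk V k) : Prop :=
  G.IsBlk b1 ∧ G.IsBlk b2 ∧ b1.1 ≠ b2.1 ∧
  ∃ e : V × V, e ∈ edgesOf (G.blkNewSeg b1) ∧ e ∈ edgesOf (G.blkOldSeg b2) ∧
    G.cap e.1 e.2 < G.demand b1.1 + G.demand b2.1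

/-- The dependency graph contains a directed cycle. -/
def HasDepCycle (G : UFN V k) : Prop := ∃ b : Blk V k, Relation.TransGen G.Dep b b

/-- The number of rounds used by an update sequence. -/
def numRounds [Fintype V] (R : V × Fin k → ℕ) : ℕ :=
  (Finset.image R Finset.univ).card

/-- An update `(v, i)` is empty if `v`'s outgoing old edge and outgoing new edge
for pair `i` coincide (in particular if `v` has no outgoing edge for pair `i`). -/
def EmptyUpd (G : UFN V k) (u : V × Fin k) : Prop :=
  outEdge (G.old u.2) u.1 = outEdge (G.new u.2) u.1

instance (G : UFN V k) (u : V × Fin k) : Decidable (G.EmptyUpd u) :=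
  inferInstanceAs (Decidable (outEdge (G.old u.2) u.1 = outEdge (G.new u.2) u.1))

/-- `R` updates every block in (at most) 3 consecutive rounds: first all internal
update-path vertices of the block, then the start vertex, then all old-path-only
vertices of the block. -/
def BlockPattern (G : UFN V k) (R : V × Fin k → ℕ) : Prop :=
  ∀ b : Blk V k, G.IsBlk b → ∃ r : ℕ,
    (∀ v ∈ G.blkNewSeg b, v ≠ b.2.1 → v ≠ b.2.2 → R (v, b.1) = r) ∧
    R (b.2.1, b.1) = r + 1 ∧
    (∀ v ∈ G.blkOldSeg b, v ∉ G.new b.1 → R (v, b.1) = r + 2)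

/-- The size of the network (total length of the flow paths). -/
def size (G : UFN V k) : ℕ := ∑ i : Fin k, ((G.old i).length + (G.new i).length)

end UFN

end FlowUpdate

/-!
Along a pair, every vertex has at most one active outgoing edge, so a transient path is unique
when it exists. It passes through all common vertices of the old and update path, and inside a
block `(a, z)` it follows the update segment when the update of `a` is resolved and the old
segment otherwise.

If block `b₁` depends on block `b₂`, resolving the start of `b₁` while that of `b₂` is pending
puts both demands on an edge that cannot carry them; so a feasible schedule resolves the start of
`b₂` in an earlier round than that of `b₁`, which is impossible around a cycle.

Conversely, if the dependency graph is acyclic, rank each block by the number of blocks reachable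
from it, and schedule all update-only vertices first, then the block starts in order of increasing
rank, then all old-only vertices. In every intermediate state each block is then traversed along
its update segment exactly when its start is resolved. An edge overloaded by the two transient
paths would lie on the update segment of a resolved block and on the old segment of an unresolved
block of the other pair; the first block then depends on the second, which has smaller rank and
so was resolved earlier.
-/

namespace FlowUpdate

variable {V : Type}

section Lists

@[simp] theorem edgesOf_cons_cons (x y : V) (l : List V) :
    edgesOf (x :: y :: l) = (x, y) :: edgesOf (y :: l) := rfl

theorem mem_edgesOf_iff {e : V × V} :
    ∀ {l : List V}, e ∈ edgesOf l ↔ ∃ l₁ l₂, l = l₁ ++ e.1 :: e.2 :: l₂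
  | [] => by simp [edgesOf]
  | [x] => by
    simp only [edgesOf, List.tail_cons, List.zip_nil_right, List.not_mem_nil, false_iff]
    rintro ⟨l₁, l₂, h⟩
    have := congrArg List.length h
    simp at this
    omega
  | x :: y :: l => by
    rw [edgesOf_cons_cons, List.mem_cons, mem_edgesOf_iff]
    constructor
    · rintro (rfl | ⟨l₁, l₂, h⟩)
      · exact ⟨[], l, rfl⟩
      · exact ⟨x :: l₁, l₂, by rw [h]; rfl⟩
    · rintro ⟨_ | ⟨w, l₁⟩, l₂, h⟩
      · simp only [List.nil_append, List.cons.injEq] at h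
        exact Or.inl (Prod.ext h.1.symm h.2.1.symm)
      · simp only [List.cons_append, List.cons.injEq] at h
        exact Or.inr ⟨l₁, l₂, h.2⟩

theorem isChain_iff_forall_mem_edgesOf {r : V → V → Prop} {l : List V} :
    l.IsChain r ↔ ∀ e ∈ edgesOf l, r e.1 e.2 := by
  simp only [List.isChain_iff_forall_rel_of_append_cons_cons, mem_edgesOf_iff, Prod.forall]
  grind

theorem fst_mem_of_mem_edgesOf {e : V × V} {l : List V} (h : e ∈ edgesOf l) : e.1 ∈ l := by
  obtain ⟨l₁, l₂, rfl⟩ := mem_edgesOf_iff.1 h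
  simp

theorem snd_mem_of_mem_edgesOf {e : V × V} {l : List V} (h : e ∈ edgesOf l) : e.2 ∈ l := by
  obtain ⟨l₁, l₂, rfl⟩ := mem_edgesOf_iff.1 h
  simp

theorem fst_mem_of_mem_edgesOf_concat {e : V × V} {l : List V} {z : V}
    (h : e ∈ edgesOf (l ++ [z])) : e.1 ∈ l := by
  obtain ⟨l₁, l₂, h⟩ := mem_edgesOf_iff.1 h
  have := congrArg List.dropLast h
  simp at this
  simp [this]

theorem edgesOf_append_cons (y : V) (ys : List V) :
    ∀ xs : List V, edgesOf (xs ++ y :: ys) = edgesOf (xs ++ [y]) ++ edgesOf (y :: ys)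
  | [] | [_] => rfl
  | x :: x' :: xs => by
    rw [List.cons_append, List.cons_append, edgesOf_cons_cons, ← List.cons_append,
      edgesOf_append_cons y ys (x' :: xs)]
    rfl

theorem mem_edgesOf_of_isInfix {l m : List V} (h : m <:+: l) {e : V × V}
    (he : e ∈ edgesOf m) : e ∈ edgesOf l := by
  obtain ⟨l₁, l₂, rfl⟩ := h
  obtain ⟨m₁, m₂, rfl⟩ := mem_edgesOf_iff.1 he
  exact mem_edgesOf_iff.2 ⟨l₁ ++ m₁, m₂ ++ l₂, by simp⟩

theorem eq_of_mem_edgesOf_of_nodup {u w w' : V} :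
    ∀ {l : List V}, l.Nodup → (u, w) ∈ edgesOf l → (u, w') ∈ edgesOf l → w = w'
  | [], _, h, _ | [_], _, h, _ => by simp [edgesOf] at h
  | x :: y :: l, hl, h, h' => by
    have hx : x ∉ y :: l := (List.nodup_cons.1 hl).1
    simp only [edgesOf_cons_cons, List.mem_cons, Prod.ext_iff] at h h'
    rcases h with ⟨rfl, rfl⟩ | h <;> rcases h' with ⟨hu, rfl⟩ | h'
    · rfl
    · exact absurd (fst_mem_of_mem_edgesOf h') hx
    · exact absurd (hu ▸ fst_mem_of_mem_edgesOf h) hx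
    · exact eq_of_mem_edgesOf_of_nodup (List.nodup_cons.1 hl).2 h h'

theorem exists_mem_edgesOf_of_ne_getLast {l : List V} {u t : V} (hu : u ∈ l)
    (hl : l.getLast? = some t) (hne : u ≠ t) : ∃ w, (u, w) ∈ edgesOf l := by
  obtain ⟨l₁, l₂, rfl⟩ := List.append_of_mem hu
  cases l₂ with
  | nil => simp at hl; exact absurd hl hne
  | cons w l₂ => exact ⟨w, mem_edgesOf_iff.2 ⟨l₁, l₂, rfl⟩⟩

theorem exists_eq_append_of_lt {ord : V → ℕ} {p : List V} (hp : p.Pairwise (ord · < ord ·))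
    {a z : V} (ha : a ∈ p) (hz : z ∈ p) (haz : ord a < ord z) :
    ∃ l₁ mid l₃, p = l₁ ++ a :: mid ++ z :: l₃ := by
  obtain ⟨l₁, l₂, rfl⟩ := List.append_of_mem ha
  rw [List.pairwise_append] at hp
  rcases List.mem_append.1 hz with hz | hz
  · exact absurd (hp.2.2 z hz a (by simp)) (by omega)
  · obtain rfl | hz := List.mem_cons.1 hz
    · omega
    · obtain ⟨mid, l₃, rfl⟩ := List.append_of_mem hz
      exact ⟨l₁, mid, l₃, by simp⟩

theorem pairwise_of_forall_mem_edgesOf {ord : V → ℕ} {p : List V}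
    (h : ∀ e ∈ edgesOf p, ord e.1 < ord e.2) : p.Pairwise (ord · < ord ·) := by
  have : (p.map ord).IsChain (· < ·) :=
    (List.isChain_map ord).2 (isChain_iff_forall_mem_edgesOf.2 h)
  simpa [List.pairwise_map] using List.isChain_iff_pairwise.1 this

end Lists

section Segments

variable [DecidableEq V]

theorem segment_eq_of_eq_append {p l₁ mid l₃ : List V} {a z : V} (hp : p.Nodup)
    (h : p = l₁ ++ a :: mid ++ z :: l₃) : segment p a z = a :: mid ++ [z] := by
  subst h
  have ha : ∀ v ∈ l₁, v ≠ a := by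
    rintro v hv rfl
    simp only [List.append_assoc, List.nodup_append, List.nodup_cons] at hp
    grind
  have hz : ∀ v ∈ a :: mid, v ≠ z := by
    rintro v hv rfl
    simp only [List.append_assoc, List.nodup_append, List.nodup_cons] at hp
    grind
  have hdrop : (l₁ ++ a :: mid ++ z :: l₃).dropWhile (fun v => decide (v ≠ a)) =
      a :: mid ++ z :: l₃ := by
    rw [List.append_assoc, List.dropWhile_append_of_pos (by simpa using ha)]
    simp
  rw [segment, hdrop, List.cons_append, ← List.cons_append,
    List.takeWhile_append_of_pos (by simpa using hz)]
  simp

theorem exists_segment_eq_of_mem_edgesOf {ord : V → ℕ} {p c : List V}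
    (hp : p.Pairwise (ord · < ord ·)) (hc : c.Pairwise (ord · < ord ·)) {a z : V}
    (hb : (a, z) ∈ edgesOf c) (ha : a ∈ p) (hz : z ∈ p) :
    ∃ mid, segment p a z = a :: mid ++ [z] ∧
      (∀ e ∈ edgesOf (segment p a z), e ∈ edgesOf p) ∧ ∀ v ∈ mid, v ∉ c := by
  obtain ⟨m₁, m₂, rfl⟩ := mem_edgesOf_iff.1 hb
  have haz : ord a < ord z := by simp_all [List.pairwise_append]
  obtain ⟨l₁, mid, l₃, rfl⟩ := exists_eq_append_of_lt hp ha hz haz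
  have hseg := segment_eq_of_eq_append (hp.imp fun h => ne_of_apply_ne ord h.ne) rfl
  refine ⟨mid, hseg, fun e he => mem_edgesOf_of_isInfix ⟨l₁, l₃, by simp⟩ (hseg ▸ he), ?_⟩
  intro v hv hvc
  have hav : ord a < ord v := by simp_all [List.pairwise_append]
  have hvz : ord v < ord z := by simp_all [List.pairwise_append]
  -- `c` is sorted by `ord`, so nothing in `c` lies strictly between its neighbours `a` and `z`
  simp only [List.pairwise_append, List.pairwise_cons] at hc
  simp only [List.mem_append, List.mem_cons] at hvc
  grind

end Segments

theorem add_le_sum_ite {ι : Type*} [Fintype ι] [DecidableEq ι] {P : ι → Prop}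
    [DecidablePred P] {f : ι → ℕ} {i j : ι} (hij : i ≠ j) (hi : P i) (hj : P j) :
    f i + f j ≤ ∑ l, if P l then f l else 0 := by
  have := Finset.sum_le_sum_of_subset (f := fun l => if P l then f l else 0)
    (Finset.subset_univ {i, j})
  rwa [Finset.sum_pair hij, if_pos hi, if_pos hj] at this

theorem le_sum_ite {ι : Type*} [Fintype ι] {P : ι → Prop} [DecidablePred P]
    {f : ι → ℕ} {i : ι} (hi : P i) : f i ≤ ∑ l, if P l then f l else 0 := by
  have := Finset.sum_le_sum_of_subset (f := fun l => if P l then f l else 0)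
    (Finset.subset_univ {i})
  rwa [Finset.sum_singleton, if_pos hi] at this

namespace UFN

section Paths

variable {E : V × V → Prop} {s t : V}

theorem IsPathIn.singleton {x : V} (h : IsPathIn E s t [x]) : x = s ∧ x = t := by
  simpa [IsPathIn] using And.intro h.1 h.2.1

theorem IsPathIn.cons_cons {x y : V} {p : List V} (h : IsPathIn E s t (x :: y :: p)) :
    x = s ∧ s ≠ t ∧ E (s, y) ∧ IsPathIn E y t (y :: p) := by
  obtain ⟨hs, ht, hc, hnd⟩ := h
  obtain rfl : x = s := by simpa using hs
  rw [List.getLast?_cons_cons] at ht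
  refine ⟨rfl, ?_, (List.isChain_cons_cons.1 hc).1,
    ⟨rfl, ht, (List.isChain_cons_cons.1 hc).2, (List.nodup_cons.1 hnd).2⟩⟩
  rintro rfl
  exact (List.nodup_cons.1 hnd).1 (List.mem_of_getLast? ht)

theorem isPathIn_unique (hE : ∀ u w w', E (u, w) → E (u, w') → w = w') :
    ∀ {p q : List V} {s : V}, IsPathIn E s t p → IsPathIn E s t q → p = q
  | [], _, _, hp, _ => by simp [IsPathIn] at hp
  | _, [], _, _, hq => by simp [IsPathIn] at hq
  | [x], [y], _, hp, hq => by rw [hp.singleton.1, hq.singleton.1]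
  | [_], _ :: _ :: _, _, hp, hq =>
    absurd (hp.singleton.1.symm.trans hp.singleton.2) hq.cons_cons.2.1
  | _ :: _ :: _, [_], _, hp, hq =>
    absurd (hq.singleton.1.symm.trans hq.singleton.2) hp.cons_cons.2.1
  | x :: x' :: p, y :: y' :: q, _, hp, hq => by
    obtain ⟨rfl, -, hx, hp'⟩ := hp.cons_cons
    obtain ⟨rfl, -, hy, hq'⟩ := hq.cons_cons
    obtain rfl := hE _ _ _ hx hy
    rw [isPathIn_unique hE hp' hq']

theorem IsPathIn.subset_of_forced {T : List V} (hT : IsPathIn E s t T) :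
    ∀ {c : V} {q : List V}, c ∈ T →
      (∀ e ∈ edgesOf (c :: q), e.1 ≠ t ∧ ∀ w, E (e.1, w) → w = e.2) →
      (∀ v ∈ c :: q, v ∈ T) ∧ ∀ e ∈ edgesOf (c :: q), e ∈ edgesOf T
  | c, [], hc, _ => ⟨by simpa using hc, by simp [edgesOf]⟩
  | c, w :: q, hc, hq => by
    obtain ⟨hct, hforced⟩ := hq (c, w) (by simp)
    obtain ⟨w₀, hw₀⟩ := exists_mem_edgesOf_of_ne_getLast hc hT.2.1 hct
    obtain rfl : w₀ = w :=
      hforced w₀ (isChain_iff_forall_mem_edgesOf.1 hT.2.2.1 _ hw₀)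
    obtain ⟨hv, he⟩ := hT.subset_of_forced (q := q) (snd_mem_of_mem_edgesOf hw₀)
      (fun e he => hq e (by simp [he]))
    refine ⟨fun v hv' => ?_, fun e he' => ?_⟩
    · rcases List.mem_cons.1 hv' with rfl | hv'
      · exact hc
      · exact hv v hv'
    · rcases List.mem_cons.1 (by simpa using he') with rfl | he'
      · exact hw₀
      · exact he e he'

end Paths

variable {k : ℕ} {G : UFN V k} {i : Fin k} {U : Set (V × Fin k)}

section Flows

open Classical in
noncomputable def flowAt (G : UFN V k) (U : Set (V × Fin k)) (i : Fin k) (v : V) : List V :=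
  if (v, i) ∈ U then G.new i else G.old i

theorem flowAt_eq_old_or_new (v : V) : G.flowAt U i v = G.old i ∨ G.flowAt U i v = G.new i := by
  unfold flowAt
  split_ifs <;> simp

theorem flowAt_of_mem {v : V} (h : (v, i) ∈ U) : G.flowAt U i v = G.new i := if_pos h

theorem flowAt_of_not_mem {v : V} (h : (v, i) ∉ U) : G.flowAt U i v = G.old i := if_neg h

theorem active_iff {e : V × V} : G.active U i e ↔ e ∈ edgesOf (G.flowAt U i e.1) := by
  by_cases h : (e.1, i) ∈ U <;> simp [active, flowAt_of_mem, flowAt_of_not_mem, h]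

end Flows

variable [DecidableEq V]

section Blocks

theorem mem_commons_iff {v : V} : v ∈ G.commons i ↔ v ∈ G.old i ∧ v ∈ G.new i := by
  simp [commons]

theorem WellFormed.exists_pairwise (hWF : G.WellFormed) (i : Fin k) : ∃ ord : V → ℕ,
    ∀ p, (p = G.old i ∨ p = G.new i ∨ p = G.commons i) → p.Pairwise (ord · < ord ·) := by
  obtain ⟨ord, hord⟩ := hWF.2.1 i
  have hold := pairwise_of_forall_mem_edgesOf fun e he => hord e (List.mem_append_left _ he)
  have hnew := pairwise_of_forall_mem_edgesOf fun e he => hord e (List.mem_append_right _ he)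
  refine ⟨ord, ?_⟩
  rintro p (rfl | rfl | rfl)
  · exact hold
  · exact hnew
  · exact hold.sublist List.filter_sublist

theorem WellFormed.nodup (hWF : G.WellFormed) {p : List V}
    (hp : p = G.old i ∨ p = G.new i ∨ p = G.commons i) : p.Nodup := by
  obtain ⟨ord, hord⟩ := hWF.exists_pairwise i
  exact (hord p hp).imp fun h => ne_of_apply_ne ord h.ne

theorem WellFormed.commons_head? (hWF : G.WellFormed) : (G.commons i).head? = some G.s := by
  obtain ⟨l, hl⟩ := List.head?_eq_some_iff.1 (hWF.1 i).1.1
  have hs : G.s ∈ G.new i := List.mem_of_mem_head? (hWF.1 i).2.1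
  simp [commons, hl, hs]

theorem WellFormed.commons_getLast? (hWF : G.WellFormed) : (G.commons i).getLast? = some G.t := by
  obtain ⟨l, hl⟩ := List.getLast?_eq_some_iff.1 (hWF.1 i).1.2.1
  have ht : G.t ∈ G.new i := List.mem_of_getLast? (hWF.1 i).2.2.1
  simp [commons, hl, ht, List.filter_append]

theorem IsBlock.fst_mem {a z : V} (hb : G.IsBlock i (a, z)) : a ∈ G.commons i :=
  fst_mem_of_mem_edgesOf hb

theorem IsBlock.snd_mem {a z : V} (hb : G.IsBlock i (a, z)) : z ∈ G.commons i :=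
  snd_mem_of_mem_edgesOf hb

theorem IsBlock.fst_ne_t (hWF : G.WellFormed) {a z : V} (hb : G.IsBlock i (a, z)) : a ≠ G.t := by
  rintro rfl
  obtain ⟨m₁, m₂, hm⟩ := mem_edgesOf_iff.1 hb
  have hnd := hWF.nodup (i := i) (Or.inr (Or.inr rfl))
  have hlast := hWF.commons_getLast? (i := i)
  rw [hm, List.getLast?_append_of_ne_nil _ (by simp)] at hlast
  rw [hm] at hnd
  simp only [List.nodup_append, List.nodup_cons] at hnd
  exact hnd.2.1.1 (List.mem_of_getLast? hlast)

theorem IsBlock.exists_segment_eq (hWF : G.WellFormed) {a z : V} (hb : G.IsBlock i (a, z))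
    {p : List V} (hp : p = G.old i ∨ p = G.new i) :
    ∃ mid, segment p a z = a :: mid ++ [z] ∧
      (∀ e ∈ edgesOf (segment p a z), e ∈ edgesOf p) ∧ ∀ v ∈ mid, v ∉ G.commons i := by
  obtain ⟨ord, hord⟩ := hWF.exists_pairwise i
  have hmem : ∀ v ∈ G.commons i, v ∈ p := by
    rcases hp with rfl | rfl
    exacts [fun v hv => (mem_commons_iff.1 hv).1, fun v hv => (mem_commons_iff.1 hv).2]
  exact exists_segment_eq_of_mem_edgesOf (hord p (hp.imp_right Or.inl))
    (hord _ (Or.inr (Or.inr rfl))) hb (hmem a hb.fst_mem) (hmem z hb.snd_mem)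

noncomputable def route (G : UFN V k) (U : Set (V × Fin k)) (i : Fin k) (a z : V) : List V :=
  segment (G.flowAt U i a) a z

theorem flowAt_eq_of_not_mem_commons {a u v : V} (ha : v ∈ G.flowAt U i a)
    (hu : v ∈ G.flowAt U i u) (hv : v ∉ G.commons i) : G.flowAt U i u = G.flowAt U i a := by
  rcases flowAt_eq_old_or_new (G := G) (U := U) (i := i) a with h | h <;>
    rcases flowAt_eq_old_or_new (G := G) (U := U) (i := i) u with h' | h' <;>
    simp_all [mem_commons_iff]

theorem active_functional (hWF : G.WellFormed) {u w w' : V} (h : G.active U i (u, w))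
    (h' : G.active U i (u, w')) : w = w' := by
  rw [active_iff] at h h'
  exact eq_of_mem_edgesOf_of_nodup
    (hWF.nodup ((flowAt_eq_old_or_new u).imp_right Or.inl)) h h'

theorem IsBlock.exists_route_eq (hWF : G.WellFormed) {a z : V} (hb : G.IsBlock i (a, z)) :
    ∃ mid, G.route U i a z = a :: mid ++ [z] ∧ ∀ e ∈ edgesOf (G.route U i a z),
      e ∈ edgesOf (G.flowAt U i a) ∧ (e.1 = a ∨ e.1 ∉ G.commons i) := by
  obtain ⟨mid, hseg, hedges, hmid⟩ := hb.exists_segment_eq hWF (flowAt_eq_old_or_new a)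
  refine ⟨mid, hseg, fun e he => ⟨hedges e he, ?_⟩⟩
  rw [route, hseg] at he
  rcases List.mem_cons.1 (fst_mem_of_mem_edgesOf_concat he) with h | h
  exacts [Or.inl h, Or.inr (hmid _ h)]

end Blocks

section TransientPaths

theorem IsBlock.route_forced (hWF : G.WellFormed) {a z : V} (hb : G.IsBlock i (a, z)) :
    ∀ e ∈ edgesOf (G.route U i a z),
      e.1 ≠ G.t ∧ ∀ w, G.active U i (e.1, w) → w = e.2 := by
  intro e he
  obtain ⟨-, -, hroute⟩ := hb.exists_route_eq (U := U) hWF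
  obtain ⟨he, hstart⟩ := hroute e he
  have ht : G.t ∈ G.commons i := List.mem_of_getLast? hWF.commons_getLast?
  refine ⟨?_, fun w hw => ?_⟩
  · rcases hstart with h | h
    · exact h ▸ hb.fst_ne_t hWF
    · exact fun h' => h (h' ▸ ht)
  rw [active_iff] at hw
  have hflow : G.flowAt U i e.1 = G.flowAt U i a := by
    rcases hstart with h | h
    · rw [h]
    · exact flowAt_eq_of_not_mem_commons (fst_mem_of_mem_edgesOf he)
        (fst_mem_of_mem_edgesOf (e := (e.1, w)) hw) h
  rw [hflow] at hw
  exact eq_of_mem_edgesOf_of_nodup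
    (hWF.nodup ((flowAt_eq_old_or_new a).imp_right Or.inl)) hw he

theorem IsBlock.route_subset_of_mem (hWF : G.WellFormed) {T : List V}
    (hT : IsPathIn (G.active U i) G.s G.t T) {a z : V} (hb : G.IsBlock i (a, z)) (ha : a ∈ T) :
    (∀ v ∈ G.route U i a z, v ∈ T) ∧
      ∀ e ∈ edgesOf (G.route U i a z), e ∈ edgesOf T := by
  obtain ⟨mid, hroute, -⟩ := hb.exists_route_eq (U := U) hWF
  have hforced := hb.route_forced (U := U) hWF
  rw [hroute, List.cons_append] at hforced ⊢
  exact hT.subset_of_forced ha hforced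

theorem commons_subset_of_isPathIn (hWF : G.WellFormed) {T : List V}
    (hT : IsPathIn (G.active U i) G.s G.t T) : ∀ c ∈ G.commons i, c ∈ T := by
  refine List.IsChain.induction (· ∈ T) _ (r := fun a z => G.IsBlock i (a, z))
    (isChain_iff_forall_mem_edgesOf.2 fun e he => he) ?_ ?_
  · intro a z hb ha
    obtain ⟨mid, hroute, -⟩ := hb.exists_route_eq (U := U) hWF
    exact (hb.route_subset_of_mem hWF hT ha).1 z (by simp [hroute])
  · intro hne
    rw [(List.head_eq_iff_head?_eq_some hne).2 hWF.commons_head?]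
    exact List.mem_of_mem_head? hT.1

theorem IsBlock.route_subset_of_isPathIn (hWF : G.WellFormed) {T : List V}
    (hT : IsPathIn (G.active U i) G.s G.t T) {a z : V} (hb : G.IsBlock i (a, z)) :
    ∀ e ∈ edgesOf (G.route U i a z), e ∈ edgesOf T :=
  (hb.route_subset_of_mem hWF hT (commons_subset_of_isPathIn hWF hT a hb.fst_mem)).2

end TransientPaths

section Construction

def Coherent (G : UFN V k) (U : Set (V × Fin k)) (i : Fin k) : Prop :=
  ∀ a z, G.IsBlock i (a, z) →
    ∀ v ∈ G.flowAt U i a, v ∉ G.commons i → ((v, i) ∈ U ↔ (a, i) ∈ U)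

def OnRoute (G : UFN V k) (U : Set (V × Fin k)) (i : Fin k) (e : V × V) : Prop :=
  ∃ a z, G.IsBlock i (a, z) ∧ e ∈ edgesOf (G.route U i a z)

theorem IsBlock.route_active (hWF : G.WellFormed) (hU : G.Coherent U i) {a z : V}
    (hb : G.IsBlock i (a, z)) : ∀ e ∈ edgesOf (G.route U i a z), G.active U i e := by
  intro e he
  obtain ⟨-, -, hroute⟩ := hb.exists_route_eq (U := U) hWF
  obtain ⟨he, hstart⟩ := hroute e he
  rw [active_iff]
  rcases hstart with h | h
  · rwa [h]
  · have := hU a z hb e.1 (fst_mem_of_mem_edgesOf he) h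
    by_cases ha : (a, i) ∈ U
    · rwa [flowAt_of_mem (this.2 ha), ← flowAt_of_mem ha]
    · rwa [flowAt_of_not_mem (mt this.1 ha), ← flowAt_of_not_mem ha]

theorem exists_activePath_of_coherent (hWF : G.WellFormed) (hU : G.Coherent U i) :
    ∀ (m₀ : List V) (c : V) (m : List V), G.commons i = m₀ ++ c :: m → ∃ q : List V,
      (c :: q).getLast? = some G.t ∧ (c :: q).IsChain (fun u v => G.active U i (u, v)) ∧
        ∀ e ∈ edgesOf (c :: q), G.OnRoute U i e
  | m₀, c, [], hm => by
    have := hWF.commons_getLast? (i := i)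
    rw [hm] at this
    simp only [List.getLast?_append, List.getLast?_singleton, Option.some_or] at this
    exact ⟨[], this, .singleton c, by simp [edgesOf]⟩
  | m₀, c, z :: m, hm => by
    have hb : G.IsBlock i (c, z) := mem_edgesOf_iff.2 ⟨m₀, m, hm⟩
    obtain ⟨q, hlast, hchain, hon⟩ :=
      exists_activePath_of_coherent hWF hU (m₀ ++ [c]) z m (by simp [hm])
    obtain ⟨mid, hroute, -⟩ := hb.exists_route_eq (U := U) hWF
    have hedges :
        edgesOf (c :: (mid ++ z :: q)) = edgesOf (G.route U i c z) ++ edgesOf (z :: q) := by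
      rw [hroute, ← edgesOf_append_cons]
      rfl
    refine ⟨mid ++ z :: q, ?_, ?_, ?_⟩
    · rw [← List.cons_append, List.getLast?_append_of_ne_nil _ (by simp)]
      exact hlast
    · rw [isChain_iff_forall_mem_edgesOf, hedges]
      intro e he
      rcases List.mem_append.1 he with he | he
      · exact hb.route_active hWF hU e he
      · exact isChain_iff_forall_mem_edgesOf.1 hchain e he
    · rw [hedges]
      intro e he
      rcases List.mem_append.1 he with he | he
      · exact ⟨c, z, hb, he⟩
      · exact hon e he

theorem nodup_of_isChain_active (hWF : G.WellFormed) {q : List V}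
    (hq : q.IsChain (fun u v => G.active U i (u, v))) : q.Nodup := by
  obtain ⟨ord, hord⟩ := hWF.2.1 i
  refine (pairwise_of_forall_mem_edgesOf (ord := ord) fun e he => ?_).imp
    fun h => ne_of_apply_ne ord h.ne
  rcases isChain_iff_forall_mem_edgesOf.1 hq e he with ⟨h, -⟩ | ⟨h, -⟩
  exacts [hord e (List.mem_append_left _ h), hord e (List.mem_append_right _ h)]

theorem demand_le_cap (hWF : G.WellFormed) {p : List V} (hp : p = G.old i ∨ p = G.new i)
    {e : V × V} (he : e ∈ edgesOf p) : G.demand i ≤ G.cap e.1 e.2 := by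
  rcases hp with rfl | rfl
  · exact (le_sum_ite (f := G.demand) (by simpa using he)).trans (hWF.2.2.2.1 e.1 e.2)
  · exact (le_sum_ite (f := G.demand) (by simpa using he)).trans (hWF.2.2.2.2 e.1 e.2)

theorem validPath_of_isChain_active (hWF : G.WellFormed) {q : List V}
    (hq : q.IsChain (fun u v => G.active U i (u, v))) : G.ValidPath i q := fun e he =>
  demand_le_cap hWF (flowAt_eq_old_or_new e.1)
    (active_iff.1 (isChain_iff_forall_mem_edgesOf.1 hq e he))

theorem exists_transientPair_of_coherent (hWF : G.WellFormed) (hU : G.Coherent U i) :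
    ∃ T, G.TransientPair U i T ∧ ∀ e ∈ edgesOf T, G.OnRoute U i e := by
  obtain ⟨m, hm⟩ := List.head?_eq_some_iff.1 (hWF.commons_head? (i := i))
  obtain ⟨q, hlast, hchain, hon⟩ := exists_activePath_of_coherent hWF hU [] G.s m hm
  have hT : IsPathIn (G.active U i) G.s G.t (G.s :: q) :=
    ⟨rfl, hlast, hchain, nodup_of_isChain_active hWF hchain⟩
  exact ⟨G.s :: q, ⟨hT, validPath_of_isChain_active hWF hchain,
    fun p hp _ => isPathIn_unique (fun _ _ _ => active_functional hWF) hp hT⟩, hon⟩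

end Construction

section Necessity

theorem lt_of_dep_of_feasible (hWF : G.WellFormed) {R : V × Fin k → ℕ} (hF : G.Feasible R)
    {j : Fin k} {a z a' z' : V} (hd : G.Dep (i, a, z) (j, a', z')) : R (a', j) < R (a, i) := by
  obtain ⟨hb, hb', hij, e, he, he', hcap⟩ := hd
  obtain ⟨T, hT, hTcap⟩ := hF (R (a, i)) {(a, i)} (by simp)
  have ha : (a, i) ∈ {u | R u < R (a, i)} ∪ {(a, i)} := Or.inr rfl
  have heT := IsBlock.route_subset_of_isPathIn hWF (hT i).1 hb e
    (by rw [route, flowAt_of_mem ha]; exact he)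
  by_contra hle
  have ha' : (a', j) ∉ {u | R u < R (a, i)} ∪ {(a, i)} := by
    rintro (h | h)
    · exact hle h
    · exact hij (congrArg Prod.snd h).symm
  have he'T := IsBlock.route_subset_of_isPathIn hWF (hT j).1 hb' e
    (by rw [route, flowAt_of_not_mem ha']; exact he')
  have := (add_le_sum_ite (f := G.demand) hij heT he'T).trans (hTcap e.1 e.2)
  omega

theorem not_hasDepCycle_of_feasible (hWF : G.WellFormed) {R : V × Fin k → ℕ}
    (hF : G.Feasible R) : ¬ G.HasDepCycle := by
  rintro ⟨b, hb⟩
  have := Relation.TransGen.lift (p := (· > ·)) (fun b : Blk V k => R (b.2.1, b.1))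
    (fun ⟨_, _, _⟩ ⟨_, _, _⟩ h => lt_of_dep_of_feasible hWF hF h) _ _ hb
  rw [Relation.transGen_eq_self] at this
  exact lt_irrefl _ this

end Necessity

section Schedule

theorem finite_setOf_isBlk (G : UFN V k) : {b | G.IsBlk b}.Finite :=
  (Set.finite_univ.prod (Set.finite_iUnion fun i => (edgesOf (G.commons i)).finite_toSet)).subset
    fun b hb => ⟨trivial, Set.mem_iUnion.2 ⟨b.1, hb⟩⟩

noncomputable def blockRank (G : UFN V k) (b : Blk V k) : ℕ :=
  {b' | Relation.TransGen G.Dep b b'}.ncard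

theorem isBlk_of_transGen_dep {b b' : Blk V k} (h : Relation.TransGen G.Dep b b') : G.IsBlk b' := by
  obtain ⟨c, -, hc⟩ := Relation.TransGen.tail'_iff.1 h
  exact hc.2.1

theorem blockRank_le_ncard (b : Blk V k) : G.blockRank b ≤ {b | G.IsBlk b}.ncard :=
  Set.ncard_le_ncard (fun _ => isBlk_of_transGen_dep) G.finite_setOf_isBlk

theorem blockRank_lt_of_dep (hA : ¬ G.HasDepCycle) {b b' : Blk V k} (h : G.Dep b b') :
    G.blockRank b' < G.blockRank b :=
  Set.ncard_lt_ncard ⟨fun _ hc => .head h hc, fun hsub => hA ⟨b', hsub (.single h)⟩⟩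
    (G.finite_setOf_isBlk.subset fun _ => isBlk_of_transGen_dep)

open Classical in
noncomputable def schedule (G : UFN V k) (u : V × Fin k) : ℕ :=
  if h : ∃ z, G.IsBlock u.2 (u.1, z) then G.blockRank (u.2, u.1, h.choose) + 1
  else if u.1 ∈ G.new u.2 then 0 else {b | G.IsBlk b}.ncard + 2

theorem schedule_of_isBlock (hWF : G.WellFormed) {a z : V} (hb : G.IsBlock i (a, z)) :
    G.schedule (a, i) = G.blockRank (i, a, z) + 1 := by
  have h : ∃ z, G.IsBlock i (a, z) := ⟨z, hb⟩
  rw [schedule, dif_pos h, eq_of_mem_edgesOf_of_nodup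
    (hWF.nodup (Or.inr (Or.inr rfl))) h.choose_spec hb]

theorem schedule_of_not_mem_old {v : V} (hv : v ∈ G.new i) (hv' : v ∉ G.old i) :
    G.schedule (v, i) = 0 := by
  rw [schedule, dif_neg fun ⟨_, hb⟩ => hv' (mem_commons_iff.1 hb.fst_mem).1, if_pos hv]

theorem schedule_of_not_mem_new {v : V} (hv : v ∉ G.new i) :
    G.schedule (v, i) = {b | G.IsBlk b}.ncard + 2 := by
  rw [schedule, dif_neg fun ⟨_, hb⟩ => hv (mem_commons_iff.1 hb.fst_mem).2, if_neg hv]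

theorem le_of_mem_round {α : Type*} {R : α → ℕ} {r : ℕ} {S : Set α} (hS : ∀ u ∈ S, R u = r)
    {u : α} (hu : u ∈ {u | R u < r} ∪ S) : R u ≤ r :=
  hu.elim (fun h => le_of_lt h) fun h => (hS u h).le

variable {r : ℕ} {S : Set (V × Fin k)}

theorem coherent_schedule_round (hWF : G.WellFormed) (hS : ∀ u ∈ S, G.schedule u = r) :
    G.Coherent ({u | G.schedule u < r} ∪ S) i := by
  intro a z hb v hv hvc
  have ha := schedule_of_isBlock hWF hb
  by_cases haU : (a, i) ∈ {u | G.schedule u < r} ∪ S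
  · rw [flowAt_of_mem haU] at hv
    have hv0 := schedule_of_not_mem_old hv fun h => hvc (mem_commons_iff.2 ⟨h, hv⟩)
    have := le_of_mem_round hS haU
    simp only [haU, iff_true]
    exact Or.inl (show G.schedule (v, i) < r by omega)
  · rw [flowAt_of_not_mem haU] at hv
    have hvN := schedule_of_not_mem_new fun h => hvc (mem_commons_iff.2 ⟨hv, h⟩)
    have := blockRank_le_ncard (G := G) (i, a, z)
    have : r ≤ G.schedule (a, i) := not_lt.1 fun h => haU (Or.inl h)
    simp only [haU, iff_false]
    intro hvU
    have := le_of_mem_round hS hvU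
    omega

theorem mem_round_of_dep (hWF : G.WellFormed) (hA : ¬ G.HasDepCycle)
    (hS : ∀ u ∈ S, G.schedule u = r) {j : Fin k} {a z a' z' : V}
    (hd : G.Dep (i, a, z) (j, a', z')) (ha : (a, i) ∈ {u | G.schedule u < r} ∪ S) :
    (a', j) ∈ {u | G.schedule u < r} ∪ S := by
  have hb : G.IsBlock i (a, z) := hd.1
  have hb' : G.IsBlock j (a', z') := hd.2.1
  have hle := le_of_mem_round hS ha
  have hlt := blockRank_lt_of_dep hA hd
  rw [schedule_of_isBlock hWF hb] at hle
  exact Or.inl (show G.schedule (a', j) < r by rw [schedule_of_isBlock hWF hb']; omega)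

theorem demand_add_demand_le_cap (hWF : G.WellFormed) (hA : ¬ G.HasDepCycle)
    (hS : ∀ u ∈ S, G.schedule u = r) {j : Fin k} (hij : i ≠ j) {a z a' z' : V}
    (hb : G.IsBlock i (a, z)) (hb' : G.IsBlock j (a', z')) {e : V × V}
    (he : e ∈ edgesOf (G.route ({u | G.schedule u < r} ∪ S) i a z))
    (he' : e ∈ edgesOf (G.route ({u | G.schedule u < r} ∪ S) j a' z')) :
    G.demand i + G.demand j ≤ G.cap e.1 e.2 := by
  set U := {u | G.schedule u < r} ∪ S
  have cross : ∀ {i j : Fin k} {a z a' z' : V}, i ≠ j → G.IsBlock i (a, z) →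
      G.IsBlock j (a', z') → (a, i) ∈ U → (a', j) ∉ U → e ∈ edgesOf (G.route U i a z) →
      e ∈ edgesOf (G.route U j a' z') → G.demand i + G.demand j ≤ G.cap e.1 e.2 := by
    intro i j a z a' z' hij hb hb' ha ha' he he'
    by_contra hcap
    rw [route, flowAt_of_mem ha] at he
    rw [route, flowAt_of_not_mem ha'] at he'
    exact ha' (mem_round_of_dep hWF hA hS ⟨hb, hb', hij, e, he, he', lt_of_not_ge hcap⟩ ha)
  have hflow := ((hb.exists_route_eq (U := U) hWF).choose_spec.2 e he).1
  have hflow' := ((hb'.exists_route_eq (U := U) hWF).choose_spec.2 e he').1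
  by_cases ha : (a, i) ∈ U <;> by_cases ha' : (a', j) ∈ U
  · rw [flowAt_of_mem ha] at hflow
    rw [flowAt_of_mem ha'] at hflow'
    exact (add_le_sum_ite (f := G.demand) hij hflow hflow').trans (hWF.2.2.2.2 e.1 e.2)
  · exact cross hij hb hb' ha ha' he he'
  · exact add_comm (G.demand i) _ ▸ cross hij.symm hb' hb ha' ha he' he
  · rw [flowAt_of_not_mem ha] at hflow
    rw [flowAt_of_not_mem ha'] at hflow'
    exact (add_le_sum_ite (f := G.demand) hij hflow hflow').trans (hWF.2.2.2.1 e.1 e.2)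

theorem feasible_schedule {G : UFN V 2} (hWF : G.WellFormed) (hA : ¬ G.HasDepCycle) :
    G.Feasible G.schedule := by
  intro r S hS
  choose T hT hon using fun i =>
    exists_transientPair_of_coherent hWF (coherent_schedule_round hWF hS (i := i))
  refine ⟨T, hT, fun u v => ?_⟩
  rw [Fin.sum_univ_two]
  by_cases h0 : (u, v) ∈ edgesOf (T 0) <;> by_cases h1 : (u, v) ∈ edgesOf (T 1)
  · obtain ⟨a, z, hb, he⟩ := hon 0 _ h0
    obtain ⟨a', z', hb', he'⟩ := hon 1 _ h1
    simpa [h0, h1] using demand_add_demand_le_cap hWF hA hS (by decide) hb hb' he he'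
  · simpa [h0, h1] using (hT 0).2.1 _ h0
  · simpa [h0, h1] using (hT 1).2.1 _ h1
  · simp [h0, h1]

end Schedule

end UFN

end FlowUpdate

open FlowUpdate in
/-- For an update flow network with exactly two update flow pairs,
each forming a DAG, a feasible update sequence exists if and only if the
dependency graph of its blocks is acyclic. -/
theorem stmt8 {V : Type} [DecidableEq V] (G : UFN V 2) (hWF : G.WellFormed) :
    (∃ R : V × Fin 2 → ℕ, G.Feasible R) ↔ ¬ G.HasDepCycle :=
  ⟨fun ⟨_, hR⟩ => UFN.not_hasDepCycle_of_feasible hWF hR,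
    fun hA => ⟨_, UFN.feasible_schedule hWF hA⟩⟩
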